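/- arXiv:1605.07580 — 4 statements merged into one kernel-verified Lean document; each statement's English description precedes it below -/
import Mathlib

section
/- Let Δ be a finite root system with positive roots Δ_+ and Weyl group W, let η be an element of the coweight lattice, y an element of W, and q a positive integer. Then the element ȳ t_{−η} of the extended affine Weyl group maps the set of affine positive roots {α + nqδ : α ∈ Δ_+, n ≥ 0} ∪ {−α + nqδ : α ∈ Δ_+, n ≥ 1} into the set of positive real affine roots if and only if for every α ∈ Δ_+ one has 0 ≤ α(η) ≤ q−1 when ȳ(α) ∈ Δ_+, and 1 ≤ α(η) ≤ q when ȳ(α) ∈ Δ_−. -/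
/-- The element `ȳ t_{-η}` of the extended affine Weyl group maps
`{α + nqδ : α ∈ Δ₊, n ≥ 0} ∪ {-α + nqδ : α ∈ Δ₊, n ≥ 1}` into the set of positive
real affine roots (a root `β + mδ` with `β ∈ Δ` is positive iff `m > 0`, or `m = 0` and
`β ∈ Δ₊`) if and only if for every `α ∈ Δ₊` one has `0 ≤ α(η) ≤ q-1` when `ȳ(α) ∈ Δ₊`
and `1 ≤ α(η) ≤ q` when `ȳ(α) ∈ Δ₋`.  Here `ev = α ↦ α(η)` is additive,
`(ȳ t_{-η})(α + mδ) = ȳ(α) + (m + α(η))δ`, and `ȳ` sends each root either to a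
positive or a negative root (exclusively). -/
theorem stmt_2 {V : Type*} [AddCommGroup V] (Δp : Set V)
    (y : V ≃+ V) (ev : V →+ ℤ) (q : ℤ) (hq : 0 < q)
    (hy : ∀ α ∈ Δp, (y α ∈ Δp ∧ -(y α) ∉ Δp) ∨ (y α ∉ Δp ∧ -(y α) ∈ Δp)) :
    (∀ α ∈ Δp, ∀ n : ℤ,
        (0 ≤ n → (0 < n * q + ev α ∨ (n * q + ev α = 0 ∧ y α ∈ Δp))) ∧
        (1 ≤ n → (0 < n * q - ev α ∨ (n * q - ev α = 0 ∧ -(y α) ∈ Δp))))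
      ↔ ∀ α ∈ Δp,
          (y α ∈ Δp → 0 ≤ ev α ∧ ev α ≤ q - 1) ∧
          (y α ∉ Δp → 1 ≤ ev α ∧ ev α ≤ q) := by
  constructor
  · intro h α hα
    have hyα := hy α hα
    obtain ⟨h0, h1⟩ := h α hα 0
    obtain ⟨g0, g1⟩ := h α hα 1
    constructor
    · intro hp
      have hneg : -(y α) ∉ Δp := by
        rcases hyα with ⟨_, h⟩ | ⟨h, _⟩
        · exact h
        · exact absurd hp h
      have e1 : 0 ≤ ev α := by rcases h0 le_rfl with h | ⟨h, _⟩ <;> omega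
      have e2 : 0 < 1 * q - ev α := by
        rcases g1 le_rfl with h | ⟨_, h⟩
        · exact h
        · exact absurd h hneg
      exact ⟨e1, by omega⟩
    · intro hp
      have hneg : -(y α) ∈ Δp := by
        rcases hyα with ⟨h, _⟩ | ⟨_, h⟩
        · exact absurd h hp
        · exact h
      have e1 : 0 < 0 * q + ev α := by
        rcases h0 le_rfl with h | ⟨_, h⟩
        · exact h
        · exact absurd h hp
      have e2 : 0 ≤ 1 * q - ev α := by rcases g1 le_rfl with h | ⟨h, _⟩ <;> omega
      exact ⟨by omega, by omega⟩
  · intro h α hα n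
    obtain ⟨c1, c2⟩ := h α hα
    constructor
    · intro hn
      by_cases hp : y α ∈ Δp
      · obtain ⟨e1, e2⟩ := c1 hp
        rcases lt_or_eq_of_le (by nlinarith : (0:ℤ) ≤ n * q + ev α) with h | h
        · exact Or.inl h
        · exact Or.inr ⟨h.symm, hp⟩
      · obtain ⟨e1, e2⟩ := c2 hp
        exact Or.inl (by nlinarith)
    · intro hn
      by_cases hp : y α ∈ Δp
      · obtain ⟨e1, e2⟩ := c1 hp
        exact Or.inl (by nlinarith)
      · obtain ⟨e1, e2⟩ := c2 hp
        have hneg : -(y α) ∈ Δp := by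
          rcases hy α hα with ⟨h, _⟩ | ⟨_, h⟩
          · exact absurd h hp
          · exact h
        rcases lt_or_eq_of_le (by nlinarith : (0:ℤ) ≤ n * q - ev α) with h | h
        · exact Or.inl h
        · exact Or.inr ⟨h.symm, hneg⟩
end

section
/- Let Δ be the root system of sl_n (n ≥ 2) and η a dominant coweight. The subsystem Δ(η) = {α ∈ Δ : α(η) = 0} has cardinality (n−1)(n−2) if and only if η = a·ϖ_1 or η = a·ϖ_{n−1} for some positive integer a, where ϖ_1 and ϖ_{n−1} are the first and last fundamental coweights. -/
open Finset

private def cnt {n : ℕ} (η : Fin n → ℤ) (i : Fin n) : ℕ :=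
  (univ.filter (fun j => η j = η i)).card

private lemma cnt_congr {n : ℕ} (η : Fin n → ℤ) {i i' : Fin n} (h : η i = η i') :
    cnt η i = cnt η i' := by
  unfold cnt; congr 1; apply filter_congr; intro j _; simp [h]

private lemma sum_cnt_special {n : ℕ} (η : Fin n → ℤ) (w : Fin n)
    (h1 : ∀ i, i ≠ w → η i ≠ η w) (h2 : ∀ i j, i ≠ w → j ≠ w → η i = η j) :
    ∑ i, cnt η i = 1 + (n - 1) * (n - 1) := by
  have hw : cnt η w = 1 := by
    unfold cnt
    have hset : univ.filter (fun j => η j = η w) = {w} := by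
      ext j
      simp only [mem_filter, mem_univ, true_and, mem_singleton]
      constructor
      · intro h; by_contra hj; exact h1 j hj h
      · rintro rfl; rfl
    rw [hset]; simp
  have hi : ∀ i ∈ univ.erase w, cnt η i = n - 1 := by
    intro i hi
    have hiw : i ≠ w := (mem_erase.mp hi).1
    unfold cnt
    have hset : univ.filter (fun j => η j = η i) = univ.erase w := by
      ext j
      simp only [mem_filter, mem_univ, true_and, mem_erase, and_true]
      constructor
      · intro h hj; subst hj; exact h1 i hiw h.symm
      · intro h; exact h2 j i h hiw
    rw [hset, card_erase_of_mem (mem_univ _), card_univ, Fintype.card_fin]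
  rw [← Finset.add_sum_erase _ _ (mem_univ w), hw, Finset.sum_congr rfl hi, sum_const,
    card_erase_of_mem (mem_univ _), card_univ, Fintype.card_fin, smul_eq_mul]

private lemma bridge {n : ℕ} (η : Fin n → ℤ) :
    Set.ncard {p : Fin n × Fin n | p.1 ≠ p.2 ∧ η p.1 = η p.2} + n = ∑ i, cnt η i := by
  classical
  have h1 : {p : Fin n × Fin n | p.1 ≠ p.2 ∧ η p.1 = η p.2}
      = ↑(univ.filter (fun p : Fin n × Fin n => p.1 ≠ p.2 ∧ η p.1 = η p.2)) := by
    ext p; simp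
  rw [h1, Set.ncard_coe_finset]
  have hPcard : (univ.filter (fun p : Fin n × Fin n => η p.1 = η p.2)).card = ∑ i, cnt η i := by
    rw [Finset.card_eq_sum_card_fiberwise (f := Prod.fst) (t := univ) (fun x _ => mem_univ _)]
    refine Finset.sum_congr rfl fun i _ => ?_
    have himg : (univ.filter (fun p : Fin n × Fin n => η p.1 = η p.2)).filter
        (fun p => p.1 = i)
        = (univ.filter (fun j => η j = η i)).image (fun j => (i, j)) := by
      ext ⟨x, y⟩
      simp only [mem_filter, mem_univ, true_and, mem_image, filter_filter, Prod.mk.injEq]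
      constructor
      · rintro ⟨h, rfl⟩; exact ⟨y, h.symm, rfl, rfl⟩
      · rintro ⟨j, hj, rfl, rfl⟩; exact ⟨hj.symm, rfl⟩
    rw [himg, Finset.card_image_of_injective _ (fun a b h => ((Prod.mk.injEq _ _ _ _).mp h).2)]
    rfl
  have hdiag : ((univ.filter (fun p : Fin n × Fin n => η p.1 = η p.2)).filter
      (fun p => p.1 = p.2)).card = n := by
    have himg : (univ.filter (fun p : Fin n × Fin n => η p.1 = η p.2)).filter
        (fun p => p.1 = p.2) = univ.image (fun i : Fin n => (i, i)) := by
      ext ⟨x, y⟩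
      simp only [mem_filter, mem_univ, true_and, mem_image, filter_filter, Prod.mk.injEq]
      constructor
      · rintro ⟨_, rfl⟩; exact ⟨x, rfl, rfl⟩
      · rintro ⟨j, rfl, rfl⟩; exact ⟨rfl, rfl⟩
    rw [himg, card_image_of_injective _ (fun a b h => ((Prod.mk.injEq _ _ _ _).mp h).1),
      card_univ, Fintype.card_fin]
  have hsplit := Finset.card_filter_add_card_filter_not
    (s := univ.filter (fun p : Fin n × Fin n => η p.1 = η p.2)) (p := fun p => p.1 = p.2)
  have hA : (univ.filter (fun p : Fin n × Fin n => p.1 ≠ p.2 ∧ η p.1 = η p.2))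
      = (univ.filter (fun p : Fin n × Fin n => η p.1 = η p.2)).filter (fun p => ¬ p.1 = p.2) := by
    rw [filter_filter]; apply filter_congr; intro p _; simp [and_comm]
  rw [hA]
  omega

private lemma key_arith (k a b t : ℕ) (ha : 1 ≤ a) (hb : 1 ≤ b)
    (hc : a + (b + t) = k + 2)
    (hineq : (k + 1) * (k + 1) + 1 ≤ a * a + (b * b + t * t)) :
    t = 0 ∧ (a = 1 ∨ b = 1) := by
  have ht0 : t = 0 := by
    by_contra h
    obtain ⟨a', rfl⟩ : ∃ a', a = a' + 1 := ⟨a - 1, by omega⟩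
    obtain ⟨b', rfl⟩ : ∃ b', b = b' + 1 := ⟨b - 1, by omega⟩
    obtain ⟨t', rfl⟩ : ∃ t', t = t' + 1 := ⟨t - 1, by omega⟩
    obtain rfl : k = a' + b' + t' + 1 := by omega
    nlinarith [Nat.zero_le (a' * b'), Nat.zero_le (a' * t'), Nat.zero_le (b' * t')]
  subst ht0
  refine ⟨rfl, ?_⟩
  by_contra h
  push_neg at h
  obtain ⟨a', rfl⟩ : ∃ a', a = a' + 2 := ⟨a - 2, by omega⟩
  obtain ⟨b', rfl⟩ : ∃ b', b = b' + 2 := ⟨b - 2, by omega⟩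
  obtain rfl : k = a' + b' + 2 := by omega
  nlinarith [Nat.zero_le (a' * b')]

set_option maxHeartbeats 1000000 in
private lemma fwd {n : ℕ} (hn : 2 ≤ n) (η : Fin n → ℤ)
    (hdom : ∀ i j : Fin n, i ≤ j → η j ≤ η i)
    (hS : ∑ i, cnt η i = (n - 1) * (n - 1) + 1) :
    ∃ w : Fin n, (w.val = 0 ∨ w.val = n - 1) ∧ (∀ i, i ≠ w → η i ≠ η w) ∧
      (∀ i j, i ≠ w → j ≠ w → η i = η j) := by
  classical
  obtain ⟨k, rfl⟩ : ∃ k, n = k + 2 := ⟨n - 2, by omega⟩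
  set z : Fin (k + 2) := ⟨0, by omega⟩ with hzdef
  set l : Fin (k + 2) := ⟨k + 1, by omega⟩ with hldef
  have htop : ∀ i, η i ≤ η z := fun i => hdom z i (by
    rw [Fin.le_def]; exact Nat.zero_le _)
  have hbot : ∀ i, η l ≤ η i := fun i => hdom i l (by
    have h := i.isLt
    rw [Fin.le_def]
    show i.val ≤ k + 1
    omega)
  have hS' : ∑ i, cnt η i = (k + 1) * (k + 1) + 1 := by
    rw [hS]; norm_num
  -- nonconstant
  have hne : η l < η z := by
    by_contra h
    push_neg at h
    have hconst : ∀ i, η i = η z := fun i => le_antisymm (htop i) (le_trans h (hbot i))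
    have hc : ∀ i : Fin (k + 2), cnt η i = k + 2 := by
      intro i; unfold cnt
      have : univ.filter (fun j => η j = η i) = univ := by
        refine filter_true_of_mem fun j _ => ?_
        rw [hconst j, hconst i]
      rw [this, card_univ, Fintype.card_fin]
    rw [Finset.sum_congr rfl (fun i _ => hc i), sum_const, card_univ, Fintype.card_fin,
      smul_eq_mul] at hS'
    nlinarith [hS']
  set a := cnt η z with hadef
  set b := cnt η l with hbdef
  have e1 := Finset.sum_filter_add_sum_filter_not univ (fun i => η i = η z) (cnt η)
  have e2 := Finset.sum_filter_add_sum_filter_not (univ.filter (fun i => ¬ η i = η z))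
    (fun i => η i = η l) (cnt η)
  have hFzsum : ∑ i ∈ univ.filter (fun i => η i = η z), cnt η i = a * a := by
    rw [Finset.sum_congr rfl (fun i hi => cnt_congr η (mem_filter.mp hi).2), sum_const,
      smul_eq_mul]
    rfl
  have hFl : (univ.filter (fun i => ¬ η i = η z)).filter (fun i => η i = η l)
      = univ.filter (fun j => η j = η l) := by
    ext j
    simp only [mem_filter, mem_univ, true_and]
    constructor
    · rintro ⟨-, h⟩; exact h
    · intro h; exact ⟨by rw [h]; exact hne.ne, h⟩
  have hFlsum : ∑ i ∈ (univ.filter (fun i => ¬ η i = η z)).filter (fun i => η i = η l),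
      cnt η i = b * b := by
    rw [hFl, Finset.sum_congr rfl (fun i hi => cnt_congr η (mem_filter.mp hi).2), sum_const,
      smul_eq_mul]
    rfl
  set M := (univ.filter (fun i => ¬ η i = η z)).filter (fun i => ¬ η i = η l) with hMdef
  set t := M.card with htdef
  have hMmem : ∀ {i}, i ∈ M ↔ (¬ η i = η z ∧ ¬ η i = η l) := by
    intro i
    rw [hMdef, mem_filter, mem_filter]
    exact ⟨fun h => ⟨h.1.2, h.2⟩, fun h => ⟨⟨mem_univ i, h.1⟩, h.2⟩⟩
  have hMsum : ∑ i ∈ M, cnt η i ≤ t * t := by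
    have : ∀ i ∈ M, cnt η i ≤ t := by
      intro i hi
      obtain ⟨hiz, hil⟩ := hMmem.mp hi
      refine card_le_card ?_
      intro j hj
      have hj' : η j = η i := (mem_filter.mp hj).2
      exact hMmem.mpr ⟨by rw [hj']; exact hiz, by rw [hj']; exact hil⟩
    calc ∑ i ∈ M, cnt η i ≤ M.card • t := Finset.sum_le_card_nsmul _ _ _ this
      _ = t * t := by rw [smul_eq_mul]
  have ha1 : 1 ≤ a := by
    refine card_pos.mpr ⟨z, ?_⟩
    simp
  have hb1 : 1 ≤ b := by
    refine card_pos.mpr ⟨l, ?_⟩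
    simp
  have hcards : a + (b + t) = k + 2 := by
    have c1 := Finset.card_filter_add_card_filter_not
      (s := (univ : Finset (Fin (k + 2)))) (p := fun i => η i = η z)
    have c2 := Finset.card_filter_add_card_filter_not
      (s := univ.filter (fun i => ¬ η i = η z)) (p := fun i => η i = η l)
    rw [card_univ, Fintype.card_fin] at c1
    rw [hFl] at c2
    have haq : a = (univ.filter (fun i => η i = η z)).card := rfl
    have hbq : b = (univ.filter (fun j => η j = η l)).card := rfl
    have htq : t = ((univ.filter (fun i => ¬ η i = η z)).filter
      (fun a => ¬ η a = η l)).card := rfl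
    omega
  have h4 : ∑ i ∈ univ.filter (fun i => ¬ η i = η z), cnt η i
      = b * b + ∑ i ∈ M, cnt η i := by
    rw [← e2, hFlsum]
  have h5 : (k + 1) * (k + 1) + 1 = a * a + (b * b + ∑ i ∈ M, cnt η i) := by
    rw [← hS', ← e1, hFzsum, h4]
  have hineq : (k + 1) * (k + 1) + 1 ≤ a * a + (b * b + t * t) := by
    rw [h5]
    omega
  obtain ⟨ht0, hab⟩ := key_arith k a b t ha1 hb1 hcards hineq
  have hM0 : ∀ i, η i = η z ∨ η i = η l := by
    intro i
    by_contra h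
    push_neg at h
    have : i ∈ M := hMmem.mpr ⟨h.1, h.2⟩
    have : 0 < t := card_pos.mpr ⟨i, this⟩
    omega
  rcases hab with h1 | h1
  · -- fiber of z is {z}
    have hsub : ({z} : Finset (Fin (k+2))) ⊆ univ.filter (fun j => η j = η z) := by
      intro j hj; rw [mem_singleton] at hj; subst hj; simp
    have hfz : univ.filter (fun j => η j = η z) = {z} :=
      (Finset.eq_of_subset_of_card_le hsub
        (by rw [card_singleton]; exact le_of_eq h1)).symm
    have hneq : ∀ i, i ≠ z → η i ≠ η z := by
      intro i hi h
      have : i ∈ univ.filter (fun j => η j = η z) := by simp [h]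
      rw [hfz, mem_singleton] at this
      exact hi this
    refine ⟨z, Or.inl rfl, hneq, fun i j hi hj => ?_⟩
    have hil : η i = η l := (hM0 i).resolve_left (hneq i hi)
    have hjl : η j = η l := (hM0 j).resolve_left (hneq j hj)
    rw [hil, hjl]
  · have hsub : ({l} : Finset (Fin (k+2))) ⊆ univ.filter (fun j => η j = η l) := by
      intro j hj; rw [mem_singleton] at hj; subst hj; simp
    have hfl : univ.filter (fun j => η j = η l) = {l} :=
      (Finset.eq_of_subset_of_card_le hsub
        (by rw [card_singleton]; exact le_of_eq h1)).symm
    have hneq : ∀ i, i ≠ l → η i ≠ η l := by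
      intro i hi h
      have : i ∈ univ.filter (fun j => η j = η l) := by simp [h]
      rw [hfl, mem_singleton] at this
      exact hi this
    refine ⟨l, Or.inr rfl, hneq, fun i j hi hj => ?_⟩
    have hiz : η i = η z := (hM0 i).resolve_right (hneq i hi)
    have hjz : η j = η z := (hM0 j).resolve_right (hneq j hj)
    rw [hiz, hjz]


set_option maxHeartbeats 1600000 in
/-- For the root system of `sl n` (roots indexed by pairs `i ≠ j` in `Fin n`,
`α_{ij}(η) = η i - η j`) and a dominant coweight `η`, the subsystem
`Δ(η) = {α : α(η) = 0}` has cardinality `(n-1)(n-2)` iff `η = a·ϖ₁` or `η = a·ϖ_{n-1}`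
for some positive integer `a`; i.e. iff either all entries except the first are equal and
the first exceeds them by `a > 0`, or all entries except the last are equal and the last
is smaller by `a > 0`. -/
theorem stmt_5 (n : ℕ) (hn : 2 ≤ n) (η : Fin n → ℤ)
    (hdom : ∀ i j : Fin n, i ≤ j → η j ≤ η i) :
    Set.ncard {p : Fin n × Fin n | p.1 ≠ p.2 ∧ η p.1 = η p.2} = (n - 1) * (n - 2)
      ↔ ((∃ a : ℤ, 0 < a ∧ η ⟨0, by omega⟩ = η ⟨1, by omega⟩ + a) ∧
            ∀ i j : Fin n, i ≠ ⟨0, by omega⟩ → j ≠ ⟨0, by omega⟩ → η i = η j) ∨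
        ((∃ a : ℤ, 0 < a ∧ η ⟨n - 1, by omega⟩ = η ⟨n - 2, by omega⟩ - a) ∧
            ∀ i j : Fin n, i ≠ ⟨n - 1, by omega⟩ → j ≠ ⟨n - 1, by omega⟩ → η i = η j) := by
  obtain ⟨k, rfl⟩ : ∃ k, n = k + 2 := ⟨n - 2, by omega⟩
  have hb := bridge η
  have hz1 : (⟨1, by omega⟩ : Fin (k + 2)) ≠ ⟨0, by omega⟩ := by
    intro h
    have h' : (1 : ℕ) = 0 := congrArg Fin.val h
    omega
  have hpl : (⟨k, by omega⟩ : Fin (k + 2)) ≠ ⟨k + 1, by omega⟩ := by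
    intro h
    have h' : k = k + 1 := congrArg Fin.val h
    omega
  constructor
  · intro h
    have hS : ∑ i, cnt η i = (k + 2 - 1) * (k + 2 - 1) + 1 := by
      have e1 : (k + 2 - 1) * (k + 2 - 2) = (k + 1) * k := rfl
      have e2 : (k + 2 - 1) * (k + 2 - 1) = (k + 1) * (k + 1) := rfl
      have e3 : (k + 1) * k + (k + 2) = (k + 1) * (k + 1) + 1 := by ring
      omega
    obtain ⟨w, hw, hneq, heq⟩ := fwd (by omega) η hdom hS
    rcases hw with hw | hw
    · left
      have hwz : w = ⟨0, Nat.succ_pos _⟩ := Fin.ext hw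
      subst hwz
      refine ⟨⟨η ⟨0, by omega⟩ - η (⟨1, by omega⟩ : Fin (k + 2)), ?_, by ring⟩, heq⟩
      have hle : η (⟨1, by omega⟩ : Fin (k + 2)) ≤ η ⟨0, by omega⟩ :=
        hdom _ _ (by rw [Fin.le_def]; exact Nat.zero_le _)
      have hne := hneq _ hz1
      omega
    · right
      have hwl : w = ⟨k + 2 - 1, Nat.sub_lt (Nat.succ_pos _) Nat.one_pos⟩ := Fin.ext hw
      subst hwl
      refine ⟨⟨η (⟨k, by omega⟩ : Fin (k + 2)) - η ⟨k + 2 - 1, by omega⟩, ?_, ?_⟩, heq⟩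
      · have hle : η (⟨k + 2 - 1, by omega⟩ : Fin (k + 2)) ≤ η ⟨k, by omega⟩ :=
          hdom _ _ (by rw [Fin.le_def]; show k ≤ k + 2 - 1; omega)
        have hne := hneq _ hpl
        omega
      · have h3 : η (⟨k + 2 - 2, by omega⟩ : Fin (k + 2))
            = η (⟨k, by omega⟩ : Fin (k + 2)) := rfl
        linarith [h3]
  · intro h
    have hS : ∑ i, cnt η i = 1 + (k + 2 - 1) * (k + 2 - 1) := by
      rcases h with ⟨⟨a, ha, hval⟩, heq⟩ | ⟨⟨a, ha, hval⟩, heq⟩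
      · refine sum_cnt_special η ⟨0, by omega⟩ ?_ heq
        intro i hi hcon
        have h1 : η i = η (⟨1, by omega⟩ : Fin (k + 2)) := heq i _ hi hz1
        rw [h1, hval] at hcon
        omega
      · refine sum_cnt_special η ⟨k + 2 - 1, by omega⟩ ?_ heq
        intro i hi hcon
        have h1 : η i = η (⟨k, by omega⟩ : Fin (k + 2)) :=
          heq i _ hi (by show (⟨k, by omega⟩ : Fin (k + 2)) ≠ _; exact hpl)
        have h2 : η (⟨k + 2 - 1, by omega⟩ : Fin (k + 2))
            = η (⟨k + 2 - 2, by omega⟩ : Fin (k + 2)) - a := hval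
        rw [h1] at hcon
        have h3 : η (⟨k + 2 - 2, by omega⟩ : Fin (k + 2))
            = η (⟨k, by omega⟩ : Fin (k + 2)) := rfl
        rw [h3] at h2
        omega
    have e1 : (k + 2 - 1) * (k + 2 - 2) = (k + 1) * k := rfl
    have e2 : (k + 2 - 1) * (k + 2 - 1) = (k + 1) * (k + 1) := rfl
    have e3 : (k + 1) * k + (k + 2) = (k + 1) * (k + 1) + 1 := by ring
    omega
end

section
/- Let A be an associative algebra, f ∈ A an invertible element such that ad f acts locally nilpotently on A, and for a ∈ ℂ define Θ_a(u) = Σ_{i≥0} binom(a,i) (ad f)^i(u) f^{−i} (a finite sum for each u). Then Θ_0 = id and for a, b ∈ ℂ, Θ_a ∘ Θ_b = Θ_{a+b}. -/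
/-
With `T := ad f ∘ (· * f⁻¹)`, the hypothesis says `Θ_a u = ∑ binom(a,i) • Tⁱ u`, i.e. `Θ_a` is the
binomial series `(1 + T)^a`: since `f` commutes with `f⁻¹`, so do `ad f` and right multiplication
by `f⁻¹`, whence `Tⁱ u = (ad f)ⁱ u * f⁻ⁱ` and `T` is locally nilpotent. For any locally nilpotent
`T`, `(1 + T)^0 = 1` and `(1 + T)^a (1 + T)^b = (1 + T)^(a+b)` by the Chu–Vandermonde identity
`binom(a+b,n) = ∑ binom(a,i) binom(b,n-i)`, all sums being truncated at the same nilpotency index.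
-/

/-- The generalized binomial coefficient `C(a, i) = a(a-1)⋯(a-i+1)/i!` for `a ∈ ℂ`. -/
noncomputable def genBinom (a : ℂ) (i : ℕ) : ℂ :=
  (∏ k ∈ Finset.range i, (a - k)) / (Nat.factorial i)

open Finset

lemma genBinom_eq_choose (a : ℂ) (n : ℕ) : genBinom a n = Ring.choose a n := by
  rw [Ring.choose_eq_smul, ← Polynomial.aeval_eq_smeval, ← Polynomial.eval_map_algebraMap,
    descPochhammer_map, descPochhammer_eval_eq_prod_range, genBinom, smul_eq_mul, div_eq_inv_mul]

lemma genBinom_zero_right (a : ℂ) : genBinom a 0 = 1 := by simp [genBinom]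

lemma genBinom_zero_left {n : ℕ} (hn : n ≠ 0) : genBinom 0 n = 0 := by
  rw [genBinom, prod_eq_zero (mem_range.2 (Nat.pos_of_ne_zero hn)) (by simp), zero_div]

lemma genBinom_add (a b : ℂ) (n : ℕ) :
    genBinom (a + b) n = ∑ i ∈ range (n + 1), genBinom a i * genBinom b (n - i) := by
  simp only [genBinom_eq_choose]
  rw [Ring.add_choose_eq n (Commute.all a b), Nat.sum_antidiagonal_eq_sum_range_succ_mk]

lemma apply_sum_smul_pow_apply_eq_zero {R M : Type*} [CommSemiring R] [AddCommMonoid M]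
    [Module R M] {S T : Module.End R M} (hST : Commute S T) {v : M} (hv : S v = 0)
    (c : ℕ → R) (N : ℕ) : S (∑ j ∈ range N, c j • (T ^ j) v) = 0 := by
  rw [map_sum]
  exact sum_eq_zero fun j _ => by
    rw [map_smul, ← Module.End.mul_apply, (hST.pow_right j).eq, Module.End.mul_apply, hv,
      map_zero, smul_zero]

section BinomialSeries

variable {M : Type*} [AddCommGroup M] [Module ℂ M] (T : Module.End ℂ M)

lemma sum_genBinom_zero_smul_pow_apply {N : ℕ} {v : M} (hN : (T ^ N) v = 0) :
    ∑ i ∈ range N, genBinom 0 i • (T ^ i) v = v := by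
  cases N with
  | zero => simpa using hN.symm
  | succ N =>
    rw [sum_range_succ', sum_eq_zero fun i _ => by rw [genBinom_zero_left i.succ_ne_zero, zero_smul]]
    simp [genBinom_zero_right]

lemma sum_genBinom_smul_pow_apply_sum {a b : ℂ} {N : ℕ} {v : M} (hN : (T ^ N) v = 0) :
    ∑ i ∈ range N, genBinom a i • (T ^ i) (∑ j ∈ range N, genBinom b j • (T ^ j) v)
      = ∑ n ∈ range N, genBinom (a + b) n • (T ^ n) v := by
  set F : ℕ → ℕ → M := fun i j => (genBinom a i * genBinom b j) • (T ^ (i + j)) v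
  have truncate (i : ℕ) : ∑ j ∈ range N, F i j = ∑ j ∈ range (N - i), F i j := by
    refine (sum_subset (range_subset_range.2 (Nat.sub_le N i)) fun j _ hj => ?_).symm
    rw [mem_range, not_lt, Nat.sub_le_iff_le_add'] at hj
    simp only [F, Module.End.pow_map_zero_of_le hj hN, smul_zero]
  calc ∑ i ∈ range N, genBinom a i • (T ^ i) (∑ j ∈ range N, genBinom b j • (T ^ j) v)
      = ∑ i ∈ range N, ∑ j ∈ range (N - i), F i j := by
        refine sum_congr rfl fun i _ => ?_
        rw [← truncate]
        simp only [F, map_sum, map_smul, smul_sum, smul_smul, pow_add, Module.End.mul_apply]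
    _ = ∑ n ∈ range N, ∑ i ∈ range (n + 1), F i (n - i) := (sum_range_diag_flip N F).symm
    _ = ∑ n ∈ range N, genBinom (a + b) n • (T ^ n) v := by
        refine sum_congr rfl fun n _ => ?_
        rw [genBinom_add, sum_smul]
        exact sum_congr rfl fun i hi => by
          simp only [F, Nat.add_sub_cancel' (Nat.lt_succ_iff.1 (mem_range.1 hi))]

end BinomialSeries

section Ad

variable (R : Type*) {A : Type*} [CommRing R] [Ring A] [Algebra R A]

-- `LieAlgebra.ad` would need the commutator Lie ring on `A`, which is not a global instance.
def ad (x : A) : Module.End R A := LinearMap.mulLeft R x - LinearMap.mulRight R x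

@[simp]
lemma ad_apply (x v : A) : ad R x v = x * v - v * x := rfl

variable {R} {x y : A}

lemma commute_ad_mulRight (h : Commute x y) :
    Commute (ad R x) (LinearMap.mulRight R y) := by
  ext v
  simp [sub_mul, mul_assoc, h.eq]

lemma ad_mul_mulRight_pow_apply (h : Commute x y) (n : ℕ) (v : A) :
    ((ad R x * LinearMap.mulRight R y) ^ n) v = (ad R x ^ n) v * y ^ n := by
  rw [(commute_ad_mulRight h).eq, (commute_ad_mulRight h).symm.mul_pow, LinearMap.pow_mulRight,
    Module.End.mul_apply, LinearMap.mulRight_apply]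

end Ad

/-- Let `A` be an associative ℂ-algebra, `f ∈ A` invertible with `ad f`
locally nilpotent, and `Θ_a(u) = Σ_{i ≥ 0} binom(a,i) (ad f)^i(u) f^{-i}` (the sum being
finite for each `u`).  Then `Θ_0 = id` and `Θ_a ∘ Θ_b = Θ_{a+b}`. -/
theorem stmt_7 {A : Type*} [Ring A] [Algebra ℂ A] (f : Aˣ)
    (hnil : ∀ u : A, ∃ N : ℕ, (fun v => (f : A) * v - v * (f : A))^[N] u = 0)
    (Θ : ℂ → A → A)
    (hΘ : ∀ (a : ℂ) (u : A) (N : ℕ),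
      (fun v => (f : A) * v - v * (f : A))^[N] u = 0 →
      Θ a u = ∑ i ∈ Finset.range N,
        genBinom a i • ((fun v => (f : A) * v - v * (f : A))^[i] u * ((f⁻¹ : Aˣ) : A) ^ i)) :
    Θ 0 = id ∧ ∀ a b : ℂ, Θ a ∘ Θ b = Θ (a + b) := by
  set D := ad ℂ (f : A)
  set T := D * LinearMap.mulRight ℂ ((f⁻¹ : Aˣ) : A)
  have hD : (fun v => (f : A) * v - v * (f : A)) = ⇑D := rfl
  have hDT (n : ℕ) (u : A) : (D ^ n) u * ((f⁻¹ : Aˣ) : A) ^ n = (T ^ n) u :=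
    (ad_mul_mulRight_pow_apply f.commute_coe_inv n u).symm
  simp only [hD, ← Module.End.coe_pow, hDT] at hnil hΘ
  have hT (N : ℕ) (u : A) (hN : (D ^ N) u = 0) : (T ^ N) u = 0 := by
    rw [← hDT, hN, zero_mul]
  have hDΘ (b : ℂ) (N : ℕ) (u : A) (hN : (D ^ N) u = 0) : (D ^ N) (Θ b u) = 0 := by
    have hDN_T : Commute (D ^ N) T :=
      ((Commute.refl D).mul_right (commute_ad_mulRight f.commute_coe_inv)).pow_left N
    rw [hΘ b u N hN]
    exact apply_sum_smul_pow_apply_eq_zero hDN_T hN _ N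
  refine ⟨funext fun u => ?_, fun a b => funext fun u => ?_⟩
  · obtain ⟨N, hN⟩ := hnil u
    rw [hΘ 0 u N hN, id, sum_genBinom_zero_smul_pow_apply T (hT N u hN)]
  · obtain ⟨N, hN⟩ := hnil u
    rw [Function.comp_apply, hΘ a _ N (hDΘ b N u hN), hΘ b u N hN, hΘ (a + b) u N hN,
      sum_genBinom_smul_pow_apply_sum T (hT N u hN)]
end

section
/- Let p, q be coprime positive integers, n ≥ 2, p ≥ n, and define k by k + n = p/q. Given λ_1,…,λ_{n−1}, μ_1,…,μ_{n−1} ∈ ℤ_{≥0} with Σλ_i ≤ p − n and Σμ_i ≤ q − n (assuming q ≥ n), set b_i = Σ_{k=i}^{n−1} (λ_k − (p/q)(μ_k + 1)) for 1 ≤ i ≤ n−1 and b_n = 0. Then for all 1 ≤ i < j ≤ n, b_i − b_j ∉ ℤ. -/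
/-! Telescoping gives `b_i - b_j = Σ_{i ≤ k < j} λ_k - (p/q) S` with `S = Σ_{i ≤ k < j} (μ_k + 1)`,
and `1 ≤ S ≤ (n - 1) + (q - n) < q`. As `p` and `q` are coprime, `q ∤ p S`, so `(p/q) S ∉ ℤ`. -/

open Finset

theorem Nat.Coprime.div_mul_ne_intCast {p q s : ℕ} (hpq : p.Coprime q) (hs : 0 < s)
    (hsq : s < q) (z : ℤ) : (p : ℚ) / q * s ≠ z := by
  intro h
  have hq : (q : ℚ) ≠ 0 := by exact_mod_cast (hs.trans hsq).ne'
  have hps : ((p * s : ℕ) : ℤ) = q * z := by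
    have : ((p * s : ℕ) : ℚ) = q * z := by
      rw [← h]
      push_cast
      field_simp
    exact_mod_cast this
  have hdvd : q ∣ p * s := Int.natCast_dvd_natCast.mp ⟨z, hps⟩
  exact absurd (Nat.le_of_dvd hs (hpq.symm.dvd_of_dvd_mul_left hdvd)) (not_le.mpr hsq)

theorem Finset.sum_Ico_sub_sum_Ico {M : Type*} [AddCommGroup M] (f : ℕ → M) {i j m : ℕ}
    (hij : i ≤ j) (hjm : j ≤ m) :
    ∑ k ∈ Ico i m, f k - ∑ k ∈ Ico j m, f k = ∑ k ∈ Ico i j, f k := by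
  rw [← sum_Ico_consecutive f hij hjm, add_sub_cancel_right]

theorem Finset.sum_Ico_add_one_le (f : ℕ → ℕ) {i j m : ℕ} (hjm : j ≤ m) :
    ∑ k ∈ Ico i j, (f k + 1) ≤ m + ∑ k ∈ range m, f k := by
  rw [sum_add_distrib, sum_const, Nat.card_Ico, smul_eq_mul, mul_one, add_comm]
  have hsub : ∑ k ∈ Ico i j, f k ≤ ∑ k ∈ range m, f k := by
    rw [range_eq_Ico]
    exact sum_le_sum_of_subset (Ico_subset_Ico (Nat.zero_le i) hjm)
  omega

theorem stmt_16_general (p q n : ℕ) (hpq : Nat.Coprime p q)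
    (hq : n ≤ q) (lam mu : ℕ → ℕ)
    (hm : (∑ k ∈ Finset.range (n - 1), mu k) ≤ q - n) :
    ∀ i j : ℕ, i < j → j ≤ n - 1 → ∀ z : ℤ,
      (∑ k ∈ Finset.Ico i (n - 1), ((lam k : ℚ) - (p : ℚ) / q * (mu k + 1))) -
      (∑ k ∈ Finset.Ico j (n - 1), ((lam k : ℚ) - (p : ℚ) / q * (mu k + 1))) ≠ z := by
  intro i j hij hjn z hz
  set S := ∑ k ∈ Ico i j, (mu k + 1)
  have hS_pos : 0 < S := sum_pos (fun _ _ ↦ Nat.succ_pos _) (nonempty_Ico.mpr hij)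
  have hS_lt : S < q := by
    have := sum_Ico_add_one_le mu (i := i) hjn
    omega
  have hdiff : (∑ k ∈ Ico i j, (lam k : ℚ)) - (p : ℚ) / q * S = z := by
    rw [← hz, sum_Ico_sub_sum_Ico _ hij.le hjn, sum_sub_distrib, ← mul_sum]
    push_cast [S]
    rfl
  apply hpq.div_mul_ne_intCast hS_pos hS_lt ((∑ k ∈ Ico i j, (lam k : ℤ)) - z)
  push_cast
  linarith

/-- Let `p, q` be coprime, `n ≥ 2`, `p, q ≥ n`, and
`λ_1,…,λ_{n-1}, μ_1,…,μ_{n-1} ∈ ℤ_{≥0}` (0-indexed here as `lam 0, …, lam (n-2)`) with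
`Σ λ_i ≤ p - n`, `Σ μ_i ≤ q - n`.  With `b_i = Σ_{k=i}^{n-2} (λ_k - (p/q)(μ_k + 1))`
(so `b_{n-1} = 0`), one has `b_i - b_j ∉ ℤ` for all `i < j ≤ n-1`. -/
theorem stmt_16 (p q n : ℕ) (hpq : Nat.Coprime p q) (hn : 2 ≤ n)
    (hp : n ≤ p) (hq : n ≤ q) (lam mu : ℕ → ℕ)
    (hl : (∑ k ∈ Finset.range (n - 1), lam k) ≤ p - n)
    (hm : (∑ k ∈ Finset.range (n - 1), mu k) ≤ q - n) :
    ∀ i j : ℕ, i < j → j ≤ n - 1 → ∀ z : ℤ,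
      (∑ k ∈ Finset.Ico i (n - 1), ((lam k : ℚ) - (p : ℚ) / q * (mu k + 1))) -
      (∑ k ∈ Finset.Ico j (n - 1), ((lam k : ℚ) - (p : ℚ) / q * (mu k + 1))) ≠ z :=
  stmt_16_general p q n hpq hq lam mu hm
end
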